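/- arXiv:0909.0608 — 5 statements merged into one kernel-verified Lean document; each statement's English description precedes it below -/
import Mathlib

section
/- Let d and m₀ be two distinct positive probability vectors on a finite set T, and let c satisfy 0 ≤ c < K²(d, m₀). Then there exists a unique π ∈ [0,1] such that the vector p̂ = π·d + (1−π)·m₀ satisfies K²(p̂, m₀) = c, and this p̂ minimizes L²(d, p) over all positive probability vectors p with K²(p, m₀) ≤ c; in particular the constrained minimum of L²(d, ·) is attained on the boundary {p : K²(p, m₀) = c}. -/
open Finset

/-- A positive probability vector on `Fin N`. -/
def IsPPV {N : ℕ} (p : Fin N → ℝ) : Prop := (∀ t, 0 < p t) ∧ ∑ t, p t = 1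

/-- Kullback–Leibler distance `K²(p, m) = ∑ m(t) log(m(t)/p(t))`. -/
noncomputable def Ksq {N : ℕ} (p m : Fin N → ℝ) : ℝ := ∑ t, m t * Real.log (m t / p t)

/-- Likelihood distance `L²(d, p) = ∑ d(t) log(d(t)/p(t))`. -/
noncomputable def Lsq {N : ℕ} (d p : Fin N → ℝ) : ℝ := ∑ t, d t * Real.log (d t / p t)

/-!
Along the segment `π ↦ p̂(π) = π d + (1 - π) m₀` the divergence `K²(p̂(π), m₀)` is continuous and
convex in `π` (concavity of `log`), vanishes at `π = 0` and is positive for `π > 0` (Gibbs), so it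
increases strictly from `0` to `K²(d, m₀)`, and the intermediate value theorem yields exactly one
`π` on the level `c`.

For optimality, write `q = p̂(π)`. The second argument of `K²(p, ·) - K²(q, ·)` enters linearly,
and `K²(q, q) = 0`, so
`K²(p, q) = π (L²(d, p) - L²(d, q)) + (1 - π) (K²(p, m₀) - K²(q, m₀))`.
Gibbs' inequality `K²(p, q) ≥ 0` and `K²(p, m₀) ≤ c = K²(q, m₀)` then force `L²(d, q) ≤ L²(d, p)`.
-/

open InformationTheory

section Divergence

variable {N : ℕ}

lemma Lsq_eq_Ksq (d p : Fin N → ℝ) : Lsq d p = Ksq p d := rfl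

lemma Ksq_self {m : Fin N → ℝ} (hm : ∀ t, 0 < m t) : Ksq m m = 0 := by
  simp [Ksq, div_self (hm _).ne']

lemma Ksq_eq_sum_klFun {p m : Fin N → ℝ} (hp : ∀ t, 0 < p t)
    (hsum : ∑ t, p t = ∑ t, m t) :
    Ksq p m = ∑ t, p t * klFun (m t / p t) := by
  have hterm : ∀ t, p t * klFun (m t / p t) = m t * Real.log (m t / p t) + (p t - m t) := by
    intro t
    rw [klFun_apply]
    field_simp [(hp t).ne']
    ring
  rw [sum_congr rfl fun t _ => hterm t, sum_add_distrib, sum_sub_distrib, hsum,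
    sub_self, add_zero, Ksq]

lemma Ksq_nonneg {p m : Fin N → ℝ} (hp : IsPPV p) (hm : IsPPV m) : 0 ≤ Ksq p m := by
  rw [Ksq_eq_sum_klFun hp.1 (hp.2.trans hm.2.symm)]
  exact sum_nonneg fun t _ =>
    mul_nonneg (hp.1 t).le (klFun_nonneg (div_pos (hm.1 t) (hp.1 t)).le)

lemma Ksq_pos_of_ne {p m : Fin N → ℝ} (hp : IsPPV p) (hm : IsPPV m) (hne : p ≠ m) :
    0 < Ksq p m := by
  obtain ⟨t, ht⟩ := Function.ne_iff.mp hne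
  have hratio : 0 ≤ m t / p t := (div_pos (hm.1 t) (hp.1 t)).le
  rw [Ksq_eq_sum_klFun hp.1 (hp.2.trans hm.2.symm)]
  refine sum_pos' (fun s _ => mul_nonneg (hp.1 s).le
    (klFun_nonneg (div_pos (hm.1 s) (hp.1 s)).le)) ⟨t, mem_univ t, mul_pos (hp.1 t) ?_⟩
  refine (klFun_nonneg hratio).lt_of_ne' fun h => ht ?_
  rw [klFun_eq_zero_iff hratio, div_eq_one_iff_eq (hp.1 t).ne'] at h
  exact h.symm

lemma Ksq_sub_Ksq {p q a : Fin N → ℝ} (hp : ∀ t, 0 < p t) (hq : ∀ t, 0 < q t)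
    (ha : ∀ t, 0 < a t) : Ksq p a - Ksq q a = ∑ t, a t * Real.log (q t / p t) := by
  rw [Ksq, Ksq, ← sum_sub_distrib]
  refine sum_congr rfl fun t _ => ?_
  rw [Real.log_div (ha t).ne' (hp t).ne', Real.log_div (ha t).ne' (hq t).ne',
    Real.log_div (hq t).ne' (hp t).ne']
  ring

end Divergence

section Mixture

variable {N : ℕ} {d m : Fin N → ℝ} {π : ℝ}

def mix (d m : Fin N → ℝ) (π : ℝ) : Fin N → ℝ := fun t => π * d t + (1 - π) * m t

lemma mix_zero : mix d m 0 = m := by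
  funext t; simp [mix]

lemma mix_one : mix d m 1 = d := by
  funext t; simp [mix]

lemma mix_ne_right (hne : d ≠ m) (hπ : π ≠ 0) : mix d m π ≠ m := by
  intro h
  obtain ⟨t, ht⟩ := Function.ne_iff.mp hne
  have hmt : π * (d t - m t) = 0 := by
    have hmix : π * d t + (1 - π) * m t = m t := congrFun h t
    linear_combination hmix
  exact ht (sub_eq_zero.mp ((mul_eq_zero.mp hmt).resolve_left hπ))

lemma mix_pos (hd : ∀ t, 0 < d t) (hm : ∀ t, 0 < m t) (hπ : π ∈ Set.Icc (0 : ℝ) 1) (t : Fin N) :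
    0 < mix d m π t := by
  rcases hπ.1.eq_or_lt with rfl | hπ0
  · simpa [mix] using hm t
  · exact add_pos_of_pos_of_nonneg (mul_pos hπ0 (hd t))
      (mul_nonneg (sub_nonneg.mpr hπ.2) (hm t).le)

lemma IsPPV.mix (hd : IsPPV d) (hm : IsPPV m) (hπ : π ∈ Set.Icc (0 : ℝ) 1) :
    IsPPV (mix d m π) := by
  refine ⟨mix_pos hd.1 hm.1 hπ, ?_⟩
  simp only [_root_.mix, sum_add_distrib, ← mul_sum, hd.2, hm.2]
  ring

lemma Ksq_sub_Ksq_mix {p q : Fin N → ℝ} (hp : ∀ t, 0 < p t) (hq : ∀ t, 0 < q t)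
    (hd : ∀ t, 0 < d t) (hm : ∀ t, 0 < m t) (hπ : π ∈ Set.Icc (0 : ℝ) 1) :
    Ksq p (mix d m π) - Ksq q (mix d m π) =
      π * (Ksq p d - Ksq q d) + (1 - π) * (Ksq p m - Ksq q m) := by
  rw [Ksq_sub_Ksq hp hq (mix_pos hd hm hπ), Ksq_sub_Ksq hp hq hd, Ksq_sub_Ksq hp hq hm,
    mul_sum, mul_sum, ← sum_add_distrib]
  refine sum_congr rfl fun t _ => ?_
  simp only [mix]
  ring

lemma Lsq_mix_le {p : Fin N → ℝ} (hd : IsPPV d) (hm : IsPPV m) (hp : IsPPV p)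
    (hπ : π ∈ Set.Icc (0 : ℝ) 1) (hpm : Ksq p m ≤ Ksq (mix d m π) m) :
    Lsq d (mix d m π) ≤ Lsq d p := by
  rw [Lsq_eq_Ksq, Lsq_eq_Ksq]
  rcases hπ.1.eq_or_lt with rfl | hπ0
  · rw [mix_zero, Ksq_self hm.1] at hpm
    have hpm : p = m := by_contra fun hne => (Ksq_pos_of_ne hp hm hne).not_ge hpm
    rw [mix_zero, hpm]
  · have hq := hd.mix hm hπ
    have hgibbs : 0 ≤ Ksq p (mix d m π) := Ksq_nonneg hp hq
    have hsplit := Ksq_sub_Ksq_mix hp.1 hq.1 hd.1 hm.1 hπ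
    rw [Ksq_self hq.1, sub_zero] at hsplit
    have hrest : (1 - π) * (Ksq p m - Ksq (mix d m π) m) ≤ 0 :=
      mul_nonpos_of_nonneg_of_nonpos (sub_nonneg.mpr hπ.2) (sub_nonpos.mpr hpm)
    have hgain : 0 ≤ π * (Ksq p d - Ksq (mix d m π) d) := by linarith
    exact sub_nonneg.mp (nonneg_of_mul_nonneg_right hgain hπ0)

lemma continuousOn_Ksq_mix (hd : ∀ t, 0 < d t) (hm : ∀ t, 0 < m t) :
    ContinuousOn (fun π => Ksq (mix d m π) m) (Set.Icc 0 1) := by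
  unfold Ksq
  refine continuousOn_finsetSum _ fun t _ => continuousOn_const.mul (ContinuousOn.log ?_ ?_)
  · refine continuousOn_const.div (by unfold mix; fun_prop) fun π hπ => (mix_pos hd hm hπ t).ne'
  · exact fun π hπ => (div_pos (hm t) (mix_pos hd hm hπ t)).ne'

lemma convexOn_Ksq_mix (hd : ∀ t, 0 < d t) (hm : ∀ t, 0 < m t) :
    ConvexOn ℝ (Set.Icc 0 1) (fun π => Ksq (mix d m π) m) := by
  refine ⟨convex_Icc 0 1, fun x hx y hy a b ha hb hab => ?_⟩
  simp only [Ksq, smul_eq_mul, mul_sum, ← sum_add_distrib]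
  refine sum_le_sum fun t _ => ?_
  have hxt := mix_pos hd hm hx t
  have hyt := mix_pos hd hm hy t
  have hcomb : mix d m (a * x + b * y) t = a * mix d m x t + b * mix d m y t := by
    simp only [mix]
    linear_combination (-(m t)) * hab
  have hconc := strictConcaveOn_log_Ioi.concaveOn.2 hxt hyt ha hb hab
  simp only [smul_eq_mul] at hconc
  rw [← hcomb] at hconc
  have hct : 0 < mix d m (a * x + b * y) t := mix_pos hd hm ((convex_Icc 0 1) hx hy ha hb hab) t
  rw [Real.log_div (hm t).ne' hct.ne', Real.log_div (hm t).ne' hxt.ne',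
    Real.log_div (hm t).ne' hyt.ne']
  linear_combination mul_le_mul_of_nonneg_left hconc (hm t).le - (m t * Real.log (m t)) * hab

lemma strictMonoOn_Ksq_mix (hd : IsPPV d) (hm : IsPPV m) (hne : d ≠ m) :
    StrictMonoOn (fun π => Ksq (mix d m π) m) (Set.Icc 0 1) := by
  have hzero : Ksq (mix d m 0) m = 0 := by rw [mix_zero, Ksq_self hm.1]
  have hpos : ∀ π ∈ Set.Icc (0 : ℝ) 1, π ≠ 0 → 0 < Ksq (mix d m π) m := fun π hπ hπ0 =>
    Ksq_pos_of_ne (hd.mix hm hπ) hm (mix_ne_right hne hπ0)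
  intro a ha b hb hab
  rcases ha.1.eq_or_lt with rfl | ha0
  · exact hzero.trans_lt <| hpos b hb hab.ne'
  · refine (convexOn_Ksq_mix hd.1 hm.1).lt_right_of_left_lt (x := 0) ⟨le_rfl, zero_le_one⟩ hb
      ?_ (hzero.trans_lt (hpos a ha ha0.ne'))
    rw [openSegment_eq_Ioo (ha0.trans hab)]
    exact ⟨ha0, hab⟩

end Mixture

theorem tube_single_element_solution_general {N : ℕ}
    (d m₀ : Fin N → ℝ) (hd : IsPPV d) (hm : IsPPV m₀) (hne : d ≠ m₀)
    (c : ℝ) (hc0 : 0 ≤ c) (hc1 : c < Ksq d m₀) :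
    ∃ π : ℝ, π ∈ Set.Icc (0 : ℝ) 1 ∧
      Ksq (fun t => π * d t + (1 - π) * m₀ t) m₀ = c ∧
      (∀ p : Fin N → ℝ, IsPPV p → Ksq p m₀ ≤ c →
        Lsq d (fun t => π * d t + (1 - π) * m₀ t) ≤ Lsq d p) ∧
      (∀ π' : ℝ, π' ∈ Set.Icc (0 : ℝ) 1 →
        Ksq (fun t => π' * d t + (1 - π') * m₀ t) m₀ = c → π' = π) := by
  obtain ⟨π, hπ, hπc⟩ : ∃ π ∈ Set.Icc (0 : ℝ) 1, Ksq (mix d m₀ π) m₀ = c := by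
    refine intermediate_value_Icc zero_le_one (continuousOn_Ksq_mix hd.1 hm.1) ?_
    rw [mix_zero, mix_one, Ksq_self hm.1]
    exact ⟨hc0, hc1.le⟩
  exact ⟨π, hπ, hπc, fun p hp hpc => Lsq_mix_le hd hm hp hπ (hpc.trans hπc.ge),
    fun π' hπ' hπ'c => (strictMonoOn_Ksq_mix hd hm hne).injOn hπ' hπ (hπ'c.trans hπc.symm)⟩

/-- Theorem 1: for `0 ≤ c < K²(d, m₀)` there is a unique `π ∈ [0,1]` such that
`p̂ = π d + (1-π) m₀` lies on the boundary `K²(p̂, m₀) = c`, and this `p̂` minimizes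
`L²(d, ·)` over the tube `{p : K²(p, m₀) ≤ c}`. -/
theorem tube_single_element_solution {N : ℕ} (hN : 1 ≤ N)
    (d m₀ : Fin N → ℝ) (hd : IsPPV d) (hm : IsPPV m₀) (hne : d ≠ m₀)
    (c : ℝ) (hc0 : 0 ≤ c) (hc1 : c < Ksq d m₀) :
    ∃ π : ℝ, π ∈ Set.Icc (0 : ℝ) 1 ∧
      Ksq (fun t => π * d t + (1 - π) * m₀ t) m₀ = c ∧
      (∀ p : Fin N → ℝ, IsPPV p → Ksq p m₀ ≤ c →
        Lsq d (fun t => π * d t + (1 - π) * m₀ t) ≤ Lsq d p) ∧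
      (∀ π' : ℝ, π' ∈ Set.Icc (0 : ℝ) 1 →
        Ksq (fun t => π' * d t + (1 - π') * m₀ t) m₀ = c → π' = π) :=
  tube_single_element_solution_general d m₀ hd hm hne c hc0 hc1
end

section
/- Let d and m₀ be positive probability vectors on a finite set T and fix π ∈ (0,1). Then the function p ↦ π·L²(d, p) + (1−π)·K²(p, m₀), defined on positive probability vectors p, attains its minimum at p = π·d + (1−π)·m₀, and this minimizer is unique. -/
/-!
Both distances are affine in `log p`, so the objective equals its value at
`w = π d + (1 - π) m₀` plus `K²(p, w)`. Gibbs' inequality, written as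
`∑ w log (w / p) = ∑ p · klFun (w / p)` with `klFun ≥ 0` vanishing only at `1`, shows that this
excess is nonnegative and zero only for `p = w`.
-/

open Finset InformationTheory

lemma mul_log_div_eq_mul_log_sub {a b : ℝ} (hb : b ≠ 0) :
    a * Real.log (a / b) = a * Real.log a - a * Real.log b := by
  rcases eq_or_ne a 0 with rfl | ha
  · simp
  · rw [Real.log_div ha hb, mul_sub]

lemma mul_log_div_eq_mul_klFun_add {a b : ℝ} (hb : b ≠ 0) :
    a * Real.log (a / b) = b * klFun (a / b) + (a - b) := by
  rw [klFun_apply]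
  field_simp
  ring

lemma mul_klFun_div_nonneg {a b : ℝ} (ha : 0 ≤ a) (hb : 0 < b) : 0 ≤ b * klFun (a / b) :=
  mul_nonneg hb.le (klFun_nonneg (div_nonneg ha hb.le))

section Gibbs

variable {ι : Type*} [Fintype ι] {w p : ι → ℝ}

lemma sum_mul_log_div_eq_sum_mul_klFun (hp : ∀ i, p i ≠ 0) (hsum : ∑ i, w i = ∑ i, p i) :
    ∑ i, w i * Real.log (w i / p i) = ∑ i, p i * klFun (w i / p i) := by
  simp only [mul_log_div_eq_mul_klFun_add (hp _), sum_add_distrib, sum_sub_distrib, hsum,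
    sub_self, add_zero]

theorem sum_mul_log_div_nonneg (hw : ∀ i, 0 ≤ w i) (hp : ∀ i, 0 < p i)
    (hsum : ∑ i, w i = ∑ i, p i) : 0 ≤ ∑ i, w i * Real.log (w i / p i) := by
  rw [sum_mul_log_div_eq_sum_mul_klFun (fun i => (hp i).ne') hsum]
  exact sum_nonneg fun i _ => mul_klFun_div_nonneg (hw i) (hp i)

theorem sum_mul_log_div_eq_zero_iff (hw : ∀ i, 0 ≤ w i) (hp : ∀ i, 0 < p i)
    (hsum : ∑ i, w i = ∑ i, p i) : ∑ i, w i * Real.log (w i / p i) = 0 ↔ w = p := by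
  rw [sum_mul_log_div_eq_sum_mul_klFun (fun i => (hp i).ne') hsum,
    sum_eq_zero_iff_of_nonneg fun i _ => mul_klFun_div_nonneg (hw i) (hp i), funext_iff]
  refine forall_congr' fun i => ?_
  rw [mul_eq_zero_iff_left (hp i).ne', klFun_eq_zero_iff (div_nonneg (hw i) (hp i).le),
    div_eq_one_iff_eq (hp i).ne']
  simp

end Gibbs

lemma IsPPV.convex_combination {N : ℕ} {d m : Fin N → ℝ} (hd : IsPPV d) (hm : IsPPV m)
    {π : ℝ} (hπ : π ∈ Set.Icc (0 : ℝ) 1) : IsPPV fun t => π * d t + (1 - π) * m t := by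
  refine ⟨fun t => convex_Ioi (0 : ℝ) (hd.1 t) (hm.1 t) hπ.1 (sub_nonneg.2 hπ.2) (by ring), ?_⟩
  rw [sum_add_distrib, ← mul_sum, ← mul_sum, hd.2, hm.2]
  ring

lemma objective_eq_objective_add_Ksq {N : ℕ} (d m₀ p : Fin N → ℝ) (π : ℝ) (hp : ∀ t, p t ≠ 0)
    (hw : ∀ t, π * d t + (1 - π) * m₀ t ≠ 0) :
    π * Lsq d p + (1 - π) * Ksq p m₀
      = π * Lsq d (fun t => π * d t + (1 - π) * m₀ t)
          + (1 - π) * Ksq (fun t => π * d t + (1 - π) * m₀ t) m₀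
        + Ksq p (fun t => π * d t + (1 - π) * m₀ t) := by
  simp only [Lsq, Ksq, mul_sum, ← sum_add_distrib]
  refine sum_congr rfl fun t _ => ?_
  simp only [mul_log_div_eq_mul_log_sub (hp t), mul_log_div_eq_mul_log_sub (hw t)]
  ring

theorem convex_combination_minimizer_general {N : ℕ}
    (d m₀ : Fin N → ℝ) (hd : IsPPV d) (hm : IsPPV m₀)
    (π : ℝ) (hπ : π ∈ Set.Ioo (0 : ℝ) 1) :
    (∀ p : Fin N → ℝ, IsPPV p →
      π * Lsq d (fun t => π * d t + (1 - π) * m₀ t)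
        + (1 - π) * Ksq (fun t => π * d t + (1 - π) * m₀ t) m₀
      ≤ π * Lsq d p + (1 - π) * Ksq p m₀) ∧
    (∀ p : Fin N → ℝ, IsPPV p →
      (∀ q : Fin N → ℝ, IsPPV q →
        π * Lsq d p + (1 - π) * Ksq p m₀ ≤ π * Lsq d q + (1 - π) * Ksq q m₀) →
      p = fun t => π * d t + (1 - π) * m₀ t) := by
  set w : Fin N → ℝ := fun t => π * d t + (1 - π) * m₀ t
  have hw : IsPPV w := hd.convex_combination hm (Set.Ioo_subset_Icc_self hπ)
  have hsum {p : Fin N → ℝ} (hp : IsPPV p) : ∑ t, w t = ∑ t, p t := hw.2.trans hp.2.symm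
  have hdecomp {p : Fin N → ℝ} (hp : IsPPV p) :
      π * Lsq d p + (1 - π) * Ksq p m₀ = π * Lsq d w + (1 - π) * Ksq w m₀ + Ksq p w :=
    objective_eq_objective_add_Ksq d m₀ p π (fun t => (hp.1 t).ne') fun t => (hw.1 t).ne'
  have gibbs {p : Fin N → ℝ} (hp : IsPPV p) : 0 ≤ Ksq p w :=
    sum_mul_log_div_nonneg (fun t => (hw.1 t).le) hp.1 (hsum hp)
  refine ⟨fun p hp => by linarith [hdecomp hp, gibbs hp], fun p hp hmin => ?_⟩
  have hKsq : Ksq p w = 0 := by linarith [hdecomp hp, gibbs hp, hmin w hw]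
  exact ((sum_mul_log_div_eq_zero_iff (fun t => (hw.1 t).le) hp.1 (hsum hp)).1 hKsq).symm

/-- For fixed `π ∈ (0,1)`, the objective `p ↦ π L²(d, p) + (1-π) K²(p, m₀)` attains
its minimum over positive probability vectors at the convex combination
`p̂ = π d + (1-π) m₀`, and this minimizer is unique. -/
theorem convex_combination_minimizer {N : ℕ} (hN : 1 ≤ N)
    (d m₀ : Fin N → ℝ) (hd : IsPPV d) (hm : IsPPV m₀)
    (π : ℝ) (hπ : π ∈ Set.Ioo (0 : ℝ) 1) :
    (∀ p : Fin N → ℝ, IsPPV p →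
      π * Lsq d (fun t => π * d t + (1 - π) * m₀ t)
        + (1 - π) * Ksq (fun t => π * d t + (1 - π) * m₀ t) m₀
      ≤ π * Lsq d p + (1 - π) * Ksq p m₀) ∧
    (∀ p : Fin N → ℝ, IsPPV p →
      (∀ q : Fin N → ℝ, IsPPV q →
        π * Lsq d p + (1 - π) * Ksq p m₀ ≤ π * Lsq d q + (1 - π) * Ksq q m₀) →
      p = fun t => π * d t + (1 - π) * m₀ t) :=
  convex_combination_minimizer_general d m₀ hd hm π hπ
end

section
/- Let Θ ⊆ ℝ^k be open, let θ ↦ m_θ be a differentiable map from Θ to positive probability vectors on a finite set T (so Σ_t m_θ(t) = 1 for all θ), let d be a positive probability vector on T, fix π ∈ (0,1), and set p_θ = π·d + (1−π)·m_θ. Define the Pearson residual δ_θ(t) = (d(t) − m_θ(t))/m_θ(t), the score u_{θ,j}(t) = (∂m_θ(t)/∂θ_j)/m_θ(t), and the weight ω(δ) = log(1 + π(δ+1)/(1−π)) / (1+δ). Then for each j, the partial derivative of the objective G(θ) = π·L²(d, p_θ) + (1−π)·K²(p_θ, m_θ) satisfies ∂G/∂θ_j = −(1−π)·Σ_t ω(δ_θ(t))·d(t)·u_{θ,j}(t).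 In particular, θ is a stationary point of G if and only if it solves the weighted estimating equation Σ_t ω(δ_θ(t))·d(t)·u_{θ,j}(t) = 0 for all j. -/
/-!
Write `q = π d + (1 - π) m`. For fixed `b`, the summand
`π b log (b / q) + (1 - π) x log (x / q)` of the objective has derivative
`(1 - π) log (x / q)` in `x = m(t)`: the terms coming from differentiating `q` cancel.
Since `∑ₜ m_θ(t) = 1` near `θ`, the derivatives of the `m_θ(t)` sum to zero, so the constant
`log (1 - π)` may be added to each coefficient, turning `log (m / q)` into
`-log (q / ((1 - π) m)) = -log (1 + π (δ + 1) / (1 - π))`, which is `-ω(δ) d / m`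
because `1 + δ = d / m`.
-/

open Finset

/-- Pearson residual `δ(t) = (d(t) − m(t))/m(t)`. -/
noncomputable def pearson {N : ℕ} (d m : Fin N → ℝ) (t : Fin N) : ℝ := (d t - m t) / m t

/-- Weight function `ω(δ) = log(1 + π(δ+1)/(1−π)) / (1+δ)`. -/
noncomputable def tubeWeight (π δ : ℝ) : ℝ := Real.log (1 + π * (δ + 1) / (1 - π)) / (1 + δ)

noncomputable def tubeSummand (π b x : ℝ) : ℝ :=
  π * (b * Real.log (b / (π * b + (1 - π) * x)))
    + (1 - π) * (x * Real.log (x / (π * b + (1 - π) * x)))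

lemma tube_objective_eq_sum {N : ℕ} (π : ℝ) (d m : Fin N → ℝ) :
    π * Lsq d (fun t => π * d t + (1 - π) * m t)
        + (1 - π) * Ksq (fun t => π * d t + (1 - π) * m t) m
      = ∑ t, tubeSummand π (d t) (m t) := by
  simp only [Lsq, Ksq, tubeSummand, mul_sum, sum_add_distrib]

lemma hasDerivAt_tubeSummand {π b x : ℝ} (hb : b ≠ 0) (hx : x ≠ 0)
    (hq : π * b + (1 - π) * x ≠ 0) :
    HasDerivAt (tubeSummand π b) ((1 - π) * Real.log (x / (π * b + (1 - π) * x))) x := by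
  have hq' : HasDerivAt (fun y => π * b + (1 - π) * y) (1 - π) x := by
    simpa using ((hasDerivAt_id x).const_mul (1 - π)).const_add (π * b)
  have hlog_b := ((hasDerivAt_const x b).div hq' hq).log (div_ne_zero hb hq)
  have hlog_x := ((hasDerivAt_id x).div hq' hq).log (div_ne_zero hx hq)
  refine (((hlog_b.const_mul b).const_mul π).add
    (((hasDerivAt_id x).mul hlog_x).const_mul (1 - π))).congr_deriv ?_
  simp only [Pi.div_apply, id]
  field_simp
  ring

lemma hasFDerivAt_tube_objective {N : ℕ} {E : Type*} [NormedAddCommGroup E] [NormedSpace ℝ E]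
    {π : ℝ} {d : Fin N → ℝ} {m : E → Fin N → ℝ} {Dm : Fin N → E →L[ℝ] ℝ} {θ : E}
    (hDm : ∀ t, HasFDerivAt (fun θ' => m θ' t) (Dm t) θ)
    (hd : ∀ t, d t ≠ 0) (hm : ∀ t, m θ t ≠ 0) (hp : ∀ t, π * d t + (1 - π) * m θ t ≠ 0) :
    HasFDerivAt
      (fun θ' => π * Lsq d (fun t => π * d t + (1 - π) * m θ' t)
        + (1 - π) * Ksq (fun t => π * d t + (1 - π) * m θ' t) (m θ'))
      (∑ t, ((1 - π) * Real.log (m θ t / (π * d t + (1 - π) * m θ t))) • Dm t) θ := by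
  simp only [tube_objective_eq_sum]
  refine HasFDerivAt.fun_sum fun t _ => ?_
  exact (hasDerivAt_tubeSummand (hd t) (hm t) (hp t)).comp_hasFDerivAt θ (hDm t)

lemma sum_eq_zero_of_hasFDerivAt_of_sum_eventually_const {ι E F : Type*} [Fintype ι]
    [NormedAddCommGroup E] [NormedSpace ℝ E] [NormedAddCommGroup F] [NormedSpace ℝ F]
    {m : E → ι → F} {Dm : ι → E →L[ℝ] F} {θ : E} {c : F}
    (hsum : ∀ᶠ θ' in nhds θ, ∑ t, m θ' t = c)
    (hDm : ∀ t, HasFDerivAt (fun θ' => m θ' t) (Dm t) θ) :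
    ∑ t, Dm t = 0 :=
  (HasFDerivAt.fun_sum fun t _ => hDm t).unique
    ((hasFDerivAt_const c θ).congr_of_eventuallyEq hsum)

lemma sum_add_const_smul_of_sum_eq_zero {ι M : Type*} [Fintype ι] [AddCommGroup M] [Module ℝ M]
    {f : ι → M} (hf : ∑ t, f t = 0) (c : ι → ℝ) (a : ℝ) :
    ∑ t, (c t + a) • f t = ∑ t, c t • f t := by
  simp only [add_smul, sum_add_distrib, ← smul_sum, hf, smul_zero, add_zero]

lemma log_div_eq_neg_log_div_mul_sub_log {x q c : ℝ} (hx : x ≠ 0) (hq : q ≠ 0) (hc : c ≠ 0) :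
    Real.log (x / q) = -Real.log (q / (c * x)) - Real.log c := by
  rw [mul_comm, ← div_div, Real.log_div (div_ne_zero hq hx) hc, ← inv_div, Real.log_inv]
  ring

lemma tubeWeight_pearson_mul_div {π b x : ℝ} (hπ : π ≠ 1) (hb : b ≠ 0) (hx : x ≠ 0) :
    tubeWeight π ((b - x) / x) * b / x = Real.log ((π * b + (1 - π) * x) / ((1 - π) * x)) := by
  have h1π : 1 - π ≠ 0 := sub_ne_zero.mpr hπ.symm
  have hδ : 1 + (b - x) / x = b / x := by field_simp; ring
  have harg : 1 + π * ((b - x) / x + 1) / (1 - π) = (π * b + (1 - π) * x) / ((1 - π) * x) := by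
    field_simp
    ring
  rw [tubeWeight, hδ, harg]
  field_simp

lemma ContinuousLinearMap.eq_zero_iff_forall_single {ι M : Type*} [Fintype ι] [DecidableEq ι]
    [TopologicalSpace M] [AddCommGroup M] [Module ℝ M] (f : (ι → ℝ) →L[ℝ] M) :
    f = 0 ↔ ∀ j, f (Pi.single j 1) = 0 := by
  refine ⟨fun hf j => by simp [hf], fun hf => coe_injective ((Pi.basisFun ℝ ι).ext fun j => ?_)⟩
  simpa using hf j

theorem weighted_estimating_equation_general {N k : ℕ}
    (Θ : Set (Fin k → ℝ)) (hΘ : IsOpen Θ)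
    (m : (Fin k → ℝ) → Fin N → ℝ) (hm : ∀ θ ∈ Θ, IsPPV (m θ))
    (d : Fin N → ℝ) (hd : IsPPV d)
    (π : ℝ) (hπ : π ∈ Set.Ioo (0 : ℝ) 1)
    (θ : Fin k → ℝ) (hθ : θ ∈ Θ)
    (Dm : Fin N → ((Fin k → ℝ) →L[ℝ] ℝ))
    (hDm : ∀ t, HasFDerivAt (fun θ' => m θ' t) (Dm t) θ) :
    ∃ DG : (Fin k → ℝ) →L[ℝ] ℝ,
      HasFDerivAt
        (fun θ' => π * Lsq d (fun t => π * d t + (1 - π) * m θ' t)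
          + (1 - π) * Ksq (fun t => π * d t + (1 - π) * m θ' t) (m θ')) DG θ ∧
      (∀ j : Fin k,
        DG (Pi.single j 1) =
          -(1 - π) * ∑ t, tubeWeight π (pearson d (m θ) t) * d t
            * (Dm t (Pi.single j 1) / m θ t)) ∧
      (DG = 0 ↔ ∀ j : Fin k,
        ∑ t, tubeWeight π (pearson d (m θ) t) * d t * (Dm t (Pi.single j 1) / m θ t) = 0) := by
  obtain ⟨hπ0, hπ1⟩ := hπ
  have h1π : 0 < 1 - π := sub_pos.mpr hπ1
  have hmθ := (hm θ hθ).1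
  set p : Fin N → ℝ := fun t => π * d t + (1 - π) * m θ t
  have hp : ∀ t, 0 < p t := fun t => by have := hd.1 t; have := hmθ t; positivity
  have hDm_sum : ∑ t, Dm t = 0 := sum_eq_zero_of_hasFDerivAt_of_sum_eventually_const
    (Filter.eventually_of_mem (hΘ.mem_nhds hθ) fun θ' hθ' => (hm θ' hθ').2) hDm
  set DG := -(1 - π) • ∑ t, Real.log (p t / ((1 - π) * m θ t)) • Dm t
  have hDG : ∀ j, DG (Pi.single j 1) = -(1 - π) * ∑ t, tubeWeight π (pearson d (m θ) t) * d t
      * (Dm t (Pi.single j 1) / m θ t) := fun j => by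
    simp only [DG, smul_apply, _root_.sum_apply, smul_eq_mul]
    congr 1
    refine sum_congr rfl fun t _ => ?_
    rw [← tubeWeight_pearson_mul_div hπ1.ne (hd.1 t).ne' (hmθ t).ne', pearson]
    ring
  refine ⟨DG, ?_, hDG, ?_⟩
  · refine (hasFDerivAt_tube_objective hDm (fun t => (hd.1 t).ne') (fun t => (hmθ t).ne')
      (fun t => (hp t).ne')).congr_fderiv ?_
    rw [← sum_add_const_smul_of_sum_eq_zero hDm_sum _ ((1 - π) * Real.log (1 - π))]
    simp only [DG, smul_sum]
    refine sum_congr rfl fun t _ => ?_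
    rw [smul_smul, log_div_eq_neg_log_div_mul_sub_log (hmθ t).ne' (hp t).ne' h1π.ne']
    congr 1
    ring
  · simp only [ContinuousLinearMap.eq_zero_iff_forall_single, hDG, mul_eq_zero, neg_eq_zero,
      h1π.ne', false_or]

/-- The gradient of the tubular objective `G(θ) = π L²(d, p_θ) + (1-π) K²(p_θ, m_θ)`,
with `p_θ = π d + (1-π) m_θ`, has `j`-th partial derivative
`−(1−π) ∑_t ω(δ_θ(t)) d(t) u_{θ,j}(t)`, where `u_{θ,j}(t)` is the score
`(∂m_θ(t)/∂θ_j)/m_θ(t)`; consequently `θ` is a stationary point of `G` iff it solves the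
weighted estimating equation `∑_t ω(δ_θ(t)) d(t) u_{θ,j}(t) = 0` for every `j`. -/
theorem weighted_estimating_equation {N k : ℕ} (hN : 1 ≤ N)
    (Θ : Set (Fin k → ℝ)) (hΘ : IsOpen Θ)
    (m : (Fin k → ℝ) → Fin N → ℝ) (hm : ∀ θ ∈ Θ, IsPPV (m θ))
    (d : Fin N → ℝ) (hd : IsPPV d)
    (π : ℝ) (hπ : π ∈ Set.Ioo (0 : ℝ) 1)
    (θ : Fin k → ℝ) (hθ : θ ∈ Θ)
    (Dm : Fin N → ((Fin k → ℝ) →L[ℝ] ℝ))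
    (hDm : ∀ t, HasFDerivAt (fun θ' => m θ' t) (Dm t) θ) :
    ∃ DG : (Fin k → ℝ) →L[ℝ] ℝ,
      HasFDerivAt
        (fun θ' => π * Lsq d (fun t => π * d t + (1 - π) * m θ' t)
          + (1 - π) * Ksq (fun t => π * d t + (1 - π) * m θ' t) (m θ')) DG θ ∧
      (∀ j : Fin k,
        DG (Pi.single j 1) =
          -(1 - π) * ∑ t, tubeWeight π (pearson d (m θ) t) * d t
            * (Dm t (Pi.single j 1) / m θ t)) ∧
      (DG = 0 ↔ ∀ j : Fin k,
        ∑ t, tubeWeight π (pearson d (m θ) t) * d t * (Dm t (Pi.single j 1) / m θ t) = 0) :=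
  weighted_estimating_equation_general Θ hΘ m hm d hd π hπ θ hθ Dm hDm
end

section
/- Let τ be a probability vector and m a positive probability vector on a finite set T. Consider the set S = {π ∈ [0,1] : there exists a probability vector e on T with τ = (1−π)·m + π·e} of admissible mixture weights in the two-point mixture representation of τ over m. Then S is nonempty (it contains π = 1) and its minimum — the mixture index of fit π*(τ, m) — equals max_t (1 − τ(t)/m(t)); in particular this maximum lies in [0,1]. -/
/-! The weight `π` is admissible exactly when `(1 - π) m ≤ τ` pointwise: the remainder
`τ - (1 - π) m` then has mass `π` and, rescaled by `1 / π`, is the required `e`. Dividing by `m`,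
this says `π ≥ 1 - τ t / m t` for every `t`, so the admissible weights form the interval
`[max_t (1 - τ t / m t), 1]`, whose left end lies in `[0, 1]` because `τ` and `m` have the
same mass. -/

open Finset

/-- The set of admissible mixture weights `π ∈ [0,1]` for which the true distribution `τ`
can be written as the two-point mixture `τ = (1−π) m + π e` with `e` a probability vector. -/
def mixWeights {N : ℕ} (τ m : Fin N → ℝ) : Set ℝ :=
  {π : ℝ | π ∈ Set.Icc (0 : ℝ) 1 ∧
    ∃ e : Fin N → ℝ, (∀ t, 0 ≤ e t) ∧ (∑ t, e t = 1) ∧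
      ∀ t, τ t = (1 - π) * m t + π * e t}

lemma sup'_one_sub_div_mem_Icc {ι : Type*} [Fintype ι] (h : (univ : Finset ι).Nonempty)
    {p q : ι → ℝ} (hp : ∀ i, 0 ≤ p i) (hq : ∀ i, 0 < q i) (hpq : ∑ i, p i ≤ ∑ i, q i) :
    univ.sup' h (fun i => 1 - p i / q i) ∈ Set.Icc (0 : ℝ) 1 := by
  obtain ⟨i, -, hi⟩ := exists_le_of_sum_le h hpq
  refine ⟨?_, sup'_le _ _ fun j _ => by linarith [div_nonneg (hp j) (hq j).le]⟩
  calc (0 : ℝ) ≤ 1 - p i / q i := by rw [sub_nonneg, div_le_one (hq i)]; exact hi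
    _ ≤ _ := le_sup' (fun i => 1 - p i / q i) (mem_univ i)

section MixWeights

variable {N : ℕ} {τ m : Fin N → ℝ}

lemma one_sub_mul_le_of_mem_mixWeights {π : ℝ} (hπ : π ∈ mixWeights τ m) (t : Fin N) :
    (1 - π) * m t ≤ τ t := by
  obtain ⟨⟨hπ0, -⟩, e, he0, -, hτ⟩ := hπ
  rw [hτ t]
  exact le_add_of_nonneg_right (mul_nonneg hπ0 (he0 t))

lemma mem_mixWeights_of_one_sub_mul_le (hτ : (∀ t, 0 ≤ τ t) ∧ ∑ t, τ t = 1)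
    (hm : ∑ t, m t = 1) {π : ℝ} (hπ : π ∈ Set.Icc (0 : ℝ) 1)
    (hle : ∀ t, (1 - π) * m t ≤ τ t) : π ∈ mixWeights τ m := by
  refine ⟨hπ, ?_⟩
  rcases hπ.1.eq_or_lt with rfl | hπ0
  · -- `π = 0` leaves no room for `e`: `m ≤ τ` with equal masses forces `τ = m`
    have hτm : ∀ t, τ t = m t := by
      have hle' : ∀ t ∈ univ, m t ≤ τ t := fun t _ => by simpa using hle t
      have := (sum_eq_sum_iff_of_le hle').mp (by rw [hm, hτ.2])
      exact fun t => (this t (mem_univ t)).symm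
    exact ⟨τ, hτ.1, hτ.2, fun t => by rw [hτm t]; ring⟩
  · refine ⟨fun t => (τ t - (1 - π) * m t) / π,
      fun t => div_nonneg (sub_nonneg.mpr (hle t)) hπ0.le, ?_, fun t => by field_simp; ring⟩
    rw [← sum_div, sum_sub_distrib, ← mul_sum, hτ.2, hm]
    field_simp
    ring

lemma mixWeights_eq_Icc_inter_Ici (hτ : (∀ t, 0 ≤ τ t) ∧ ∑ t, τ t = 1)
    (hm : (∀ t, 0 < m t) ∧ ∑ t, m t = 1) (h : (univ : Finset (Fin N)).Nonempty) :
    mixWeights τ m = Set.Icc 0 1 ∩ Set.Ici (univ.sup' h fun t => 1 - τ t / m t) := by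
  have hle_iff : ∀ π t, (1 - π) * m t ≤ τ t ↔ 1 - τ t / m t ≤ π := fun π t => by
    rw [← le_div_iff₀ (hm.1 t)]
    constructor <;> intro <;> linarith
  ext π
  simp only [Set.mem_inter_iff, Set.mem_Ici, sup'_le_iff, mem_univ, true_implies, ← hle_iff]
  exact ⟨fun hπ => ⟨hπ.1, one_sub_mul_le_of_mem_mixWeights hπ⟩,
    fun ⟨hπ, hle⟩ => mem_mixWeights_of_one_sub_mul_le hτ hm.2 hπ hle⟩

end MixWeights

/-- For `τ` a probability vector and `m` a positive probability vector, the set of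
admissible mixture weights contains `π = 1`, and its least element — the mixture index of
fit `π*(τ, m)` — equals `max_t (1 − τ(t)/m(t))`, which moreover lies in `[0,1]`. -/
theorem mixture_index_formula {N : ℕ} (hN : 1 ≤ N)
    (τ m : Fin N → ℝ)
    (hτ : (∀ t, 0 ≤ τ t) ∧ ∑ t, τ t = 1)
    (hm : (∀ t, 0 < m t) ∧ ∑ t, m t = 1) :
    (1 : ℝ) ∈ mixWeights τ m ∧
    IsLeast (mixWeights τ m)
      (Finset.univ.sup' ⟨⟨0, hN⟩, Finset.mem_univ _⟩ (fun t => 1 - τ t / m t)) ∧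
    Finset.univ.sup' ⟨⟨0, hN⟩, Finset.mem_univ _⟩ (fun t => 1 - τ t / m t)
      ∈ Set.Icc (0 : ℝ) 1 := by
  have hP := sup'_one_sub_div_mem_Icc ⟨⟨0, hN⟩, mem_univ _⟩ hτ.1 hm.1 (by rw [hτ.2, hm.2])
  rw [mixWeights_eq_Icc_inter_Ici hτ hm ⟨⟨0, hN⟩, mem_univ _⟩]
  exact ⟨⟨Set.right_mem_Icc.mpr zero_le_one, hP.2⟩,
    ⟨⟨hP, Set.mem_Ici.mpr le_rfl⟩, fun _ hπ => hπ.2⟩, hP⟩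
end

section
/- Let d and m₀ be two distinct positive probability vectors on a finite set T. Then the function g(π) = L²(d, π·d + (1−π)·m₀) is strictly decreasing on the interval [0,1], with g(1) = 0; thus as the mixing weight π increases toward 1 the likelihood distance from the data d to the convex combination decreases monotonically to zero. -/
/-!
Since `p ↦ -log p` is convex, `π ↦ L²(d, π d + (1 - π) m₀)` is convex on `[0, 1]`. It vanishes at
`π = 1` and, by Gibbs' inequality, is positive for `π < 1`. A convex function on an interval that
is strictly smallest at the right endpoint is strictly decreasing there.
-/

open Finset

theorem ConvexOn.strictAntiOn_of_lt_right {𝕜 β : Type*} [Field 𝕜] [LinearOrder 𝕜]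
    [IsStrictOrderedRing 𝕜] [AddCommMonoid β] [LinearOrder β] [IsOrderedCancelAddMonoid β]
    [Module 𝕜 β] [PosSMulStrictMono 𝕜 β] {f : 𝕜 → β} {a b : 𝕜}
    (hf : ConvexOn 𝕜 (Set.Icc a b) f) (h : ∀ x ∈ Set.Ico a b, f b < f x) :
    StrictAntiOn f (Set.Icc a b) := by
  intro x hx y hy hxy
  rcases hy.2.eq_or_lt with rfl | hyb
  · exact h x ⟨hx.1, hxy⟩
  · exact hf.lt_left_of_right_lt hx (Set.right_mem_Icc.2 (hx.1.trans (hxy.trans hyb).le))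
      (Ioo_subset_openSegment ⟨hxy, hyb⟩) (h y ⟨hy.1, hyb⟩)

theorem sub_lt_mul_log_div {a b : ℝ} (ha : 0 ≤ a) (hb : 0 < b) (hab : a ≠ b) :
    a - b < a * Real.log (a / b) := by
  rcases ha.eq_or_lt with rfl | ha
  · simpa using hb
  have hlog : Real.log (b / a) < b / a - 1 :=
    Real.log_lt_sub_one_of_pos (div_pos hb ha) (by rwa [Ne, div_eq_one_iff_eq ha.ne', eq_comm])
  calc a - b = -(a * (b / a - 1)) := by field_simp; ring
    _ < -(a * Real.log (b / a)) := neg_lt_neg (mul_lt_mul_of_pos_left hlog ha)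
    _ = a * Real.log (a / b) := by rw [← inv_div, Real.log_inv, mul_neg, neg_neg]

theorem sub_le_mul_log_div {a b : ℝ} (ha : 0 ≤ a) (hb : 0 < b) :
    a - b ≤ a * Real.log (a / b) := by
  rcases eq_or_ne a b with rfl | hab
  · simp
  · exact (sub_lt_mul_log_div ha hb hab).le

theorem lsq_self {N : ℕ} (d : Fin N → ℝ) : Lsq d d = 0 :=
  Finset.sum_eq_zero fun t _ => by
    rcases eq_or_ne (d t) 0 with h | h <;> simp [h]

theorem lsq_pos_of_ne {N : ℕ} {d p : Fin N → ℝ} (hd : ∀ t, 0 ≤ d t) (hp : ∀ t, 0 < p t)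
    (hsum : ∑ t, p t = ∑ t, d t) (hne : d ≠ p) : 0 < Lsq d p := by
  obtain ⟨t₀, ht₀⟩ := Function.ne_iff.1 hne
  calc 0 = ∑ t, (d t - p t) := by rw [Finset.sum_sub_distrib, hsum, sub_self]
    _ < Lsq d p := Finset.sum_lt_sum (fun t _ => sub_le_mul_log_div (hd t) (hp t))
        ⟨t₀, Finset.mem_univ _, sub_lt_mul_log_div (hd t₀) (hp t₀) ht₀⟩

theorem convexOn_lsq {N : ℕ} {d : Fin N → ℝ} (hd : ∀ t, 0 ≤ d t) :
    ConvexOn ℝ {p | ∀ t, 0 < p t} (Lsq d) := by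
  refine ⟨fun p hp q hq a b ha hb hab t => convex_Ioi (0 : ℝ) (hp t) (hq t) ha hb hab, ?_⟩
  intro p hp q hq a b ha hb hab
  simp only [Lsq, Pi.add_apply, Pi.smul_apply, smul_eq_mul, Finset.mul_sum,
    ← Finset.sum_add_distrib]
  refine Finset.sum_le_sum fun t _ => ?_
  rcases (hd t).eq_or_lt with hdt | hdt
  · simp [← hdt]
  have hpq : 0 < a * p t + b * q t := convex_Ioi (0 : ℝ) (hp t) (hq t) ha hb hab
  have hconc : a * Real.log (p t) + b * Real.log (q t) ≤ Real.log (a * p t + b * q t) :=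
    strictConcaveOn_log_Ioi.concaveOn.2 (hp t) (hq t) ha hb hab
  rw [Real.log_div hdt.ne' hpq.ne', Real.log_div hdt.ne' (hp t).ne',
    Real.log_div hdt.ne' (hq t).ne']
  have := mul_le_mul_of_nonneg_left hconc hdt.le
  linear_combination this - d t * Real.log (d t) * hab

theorem convex_setOf_isPPV {N : ℕ} : Convex ℝ {p : Fin N → ℝ | IsPPV p} := by
  intro p hp q hq a b ha hb hab
  refine ⟨fun t => convex_Ioi (0 : ℝ) (hp.1 t) (hq.1 t) ha hb hab, ?_⟩
  simp [Finset.sum_add_distrib, ← Finset.mul_sum, hp.2, hq.2, hab]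

theorem likelihood_distance_decreasing_general {N : ℕ}
    (d m₀ : Fin N → ℝ) (hd : IsPPV d) (hm : IsPPV m₀) (hne : d ≠ m₀) :
    StrictAntiOn (fun π : ℝ => Lsq d (fun t => π * d t + (1 - π) * m₀ t))
      (Set.Icc (0 : ℝ) 1) ∧
    Lsq d (fun t => (1 : ℝ) * d t + (1 - 1) * m₀ t) = 0 := by
  have hd₀ : ∀ t, 0 ≤ d t := fun t => (hd.1 t).le
  have hmix : (fun π : ℝ => Lsq d (fun t => π * d t + (1 - π) * m₀ t)) =
      Lsq d ∘ AffineMap.lineMap m₀ d := by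
    ext π
    simp only [Function.comp_apply, AffineMap.lineMap_apply_module]
    congr 1; ext t; simp only [Pi.add_apply, Pi.smul_apply, smul_eq_mul]; ring
  have hmix_ppv : ∀ π ∈ Set.Icc (0 : ℝ) 1, IsPPV (AffineMap.lineMap m₀ d π) :=
    fun π hπ => convex_setOf_isPPV.lineMap_mem hm hd hπ
  have hconvex : ConvexOn ℝ (Set.Icc (0 : ℝ) 1) (Lsq d ∘ AffineMap.lineMap m₀ d) :=
    ((convexOn_lsq hd₀).comp_affineMap _).subset
      (fun π hπ => (hmix_ppv π hπ).1) (convex_Icc 0 1)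
  have hpos : ∀ π ∈ Set.Ico (0 : ℝ) 1, 0 < Lsq d (AffineMap.lineMap m₀ d π) := by
    intro π hπ
    have hppv := hmix_ppv π (Set.Ico_subset_Icc_self hπ)
    refine lsq_pos_of_ne hd₀ hppv.1 (by rw [hppv.2, hd.2]) ?_
    rw [ne_comm, Ne, AffineMap.lineMap_eq_right_iff]
    exact not_or.2 ⟨Ne.symm hne, hπ.2.ne⟩
  refine ⟨hmix ▸ hconvex.strictAntiOn_of_lt_right fun π hπ => ?_, by simpa using lsq_self d⟩
  simpa [lsq_self] using hpos π hπ

/-- For distinct positive probability vectors `d` and `m₀`, the likelihood distance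
`g(π) = L²(d, π d + (1-π) m₀)` is strictly decreasing in the mixing weight `π` on `[0,1]`,
and it vanishes at `π = 1`. -/
theorem likelihood_distance_decreasing {N : ℕ} (hN : 1 ≤ N)
    (d m₀ : Fin N → ℝ) (hd : IsPPV d) (hm : IsPPV m₀) (hne : d ≠ m₀) :
    StrictAntiOn (fun π : ℝ => Lsq d (fun t => π * d t + (1 - π) * m₀ t))
      (Set.Icc (0 : ℝ) 1) ∧
    Lsq d (fun t => (1 : ℝ) * d t + (1 - 1) * m₀ t) = 0 :=
  likelihood_distance_decreasing_general d m₀ hd hm hne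
end
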